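/- The subspace Δ = X⊗K[T] + Y⊗T·K[T] + Z⊗(T-1)·K[T] of the three-point loop algebra sl2 ⊗ K[T,T^{-1},(T-1)^{-1}] is closed under the Lie bracket, i.e., Δ is a Lie subalgebra. -/

import Mathlib

/-!
Writing `K[T] ⊆ K[T, T⁻¹, (T-1)⁻¹]` for the polynomials in `T`, the space `Δ` contains every
`a ⊗ X`, `T a ⊗ Y` and `(T-1) a ⊗ Z` with `a ∈ K[T]`. Since the bracket is bilinear it suffices to
bracket two spanning vectors, and by the multiplication table of `sl2` the product of their
coefficients already carries the factors `T`, `T-1` demanded by both basis vectors that occur: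
`⁅a ⊗ X, T b ⊗ Y⁆ = 2 T a b ⊗ X + 2 T a b ⊗ Y`, `⁅T a ⊗ Y, (T-1) b ⊗ Z⁆ = 2 T (T-1) a b ⊗ (Y + Z)`
and `⁅(T-1) a ⊗ Z, b ⊗ X⁆ = 2 (T-1) a b ⊗ (Z + X)`.
-/
set_option synthInstance.maxHeartbeats 1000000
set_option maxHeartbeats 1000000

namespace TetPaper
variable {K : Type*} [Field K]

/-- Auxiliary bracket for `sl2` in the `X,Y,Z` coordinates, where
`[X,Y] = 2X+2Y`, `[Y,Z] = 2Y+2Z`, `[Z,X] = 2Z+2X`. -/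
def sl2xb (u v : Fin 3 → K) : Fin 3 → K :=
  ![2*(u 0 * v 1 - u 1 * v 0) + 2*(u 2 * v 0 - u 0 * v 2),
    2*(u 0 * v 1 - u 1 * v 0) + 2*(u 1 * v 2 - u 2 * v 1),
    2*(u 2 * v 0 - u 0 * v 2) + 2*(u 1 * v 2 - u 2 * v 1)]

lemma sl2xb_add_lie (x y z : Fin 3 → K) : sl2xb (x + y) z = sl2xb x z + sl2xb y z := by
  funext i; fin_cases i <;> simp [sl2xb] <;> ring

lemma sl2xb_lie_add (x y z : Fin 3 → K) : sl2xb x (y + z) = sl2xb x y + sl2xb x z := by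
  funext i; fin_cases i <;> simp [sl2xb] <;> ring

lemma sl2xb_lie_self (x : Fin 3 → K) : sl2xb x x = 0 := by
  funext i; fin_cases i <;> simp [sl2xb, -mul_eq_zero] <;> ring

lemma sl2xb_leibniz (x y z : Fin 3 → K) :
    sl2xb x (sl2xb y z) = sl2xb (sl2xb x y) z + sl2xb y (sl2xb x z) := by
  funext i; fin_cases i <;> simp [sl2xb] <;> ring

lemma sl2xb_smul (t : K) (x y : Fin 3 → K) : sl2xb x (t • y) = t • sl2xb x y := by
  funext i; fin_cases i <;> simp [sl2xb] <;> ring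

end TetPaper

/-- The Lie algebra over `K` with basis `X, Y, Z` and brackets
`[X,Y] = 2X+2Y`, `[Y,Z] = 2Y+2Z`, `[Z,X] = 2Z+2X`. -/
def Sl2X (K : Type*) := Fin 3 → K

noncomputable instance {K : Type*} [Field K] : AddCommGroup (Sl2X K) :=
  inferInstanceAs (AddCommGroup (Fin 3 → K))

noncomputable instance {K : Type*} [Field K] : Module K (Sl2X K) :=
  inferInstanceAs (Module K (Fin 3 → K))

noncomputable instance {K : Type*} [Field K] : LieRing (Sl2X K) where
  bracket u v := TetPaper.sl2xb u v
  add_lie x y z := TetPaper.sl2xb_add_lie x y z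
  lie_add x y z := TetPaper.sl2xb_lie_add x y z
  lie_self x := TetPaper.sl2xb_lie_self x
  leibniz_lie x y z := TetPaper.sl2xb_leibniz x y z

noncomputable instance {K : Type*} [Field K] : LieAlgebra K (Sl2X K) where
  lie_smul t x y := TetPaper.sl2xb_smul t x y

namespace Sl2X
variable (K : Type*) [Field K]
/-- The basis vector `X`. -/
noncomputable def Xv : Sl2X K := (![1,0,0] : Fin 3 → K)
/-- The basis vector `Y`. -/
noncomputable def Yv : Sl2X K := (![0,1,0] : Fin 3 → K)
/-- The basis vector `Z`. -/
noncomputable def Zv : Sl2X K := (![0,0,1] : Fin 3 → K)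
end Sl2X
open scoped Polynomial

/-- The algebra `K[T, T⁻¹, (T-1)⁻¹]`, realized as the subalgebra of the field of
rational functions generated by `T`, `T⁻¹` and `(T-1)⁻¹`. -/
noncomputable def Arat (K : Type*) [Field K] : Subalgebra K (RatFunc K) :=
  Algebra.adjoin K {RatFunc.X, RatFunc.X⁻¹, (RatFunc.X - 1)⁻¹}

/-- The element `T` of `Arat K`. -/
noncomputable def tA (K : Type*) [Field K] : Arat K :=
  ⟨RatFunc.X, Algebra.subset_adjoin (by simp)⟩

/-- The element `T⁻¹` of `Arat K`. -/
noncomputable def tiA (K : Type*) [Field K] : Arat K :=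
  ⟨RatFunc.X⁻¹, Algebra.subset_adjoin (by simp)⟩

/-- The element `T' = 1 - T⁻¹` of `Arat K`. -/
noncomputable def tpA (K : Type*) [Field K] : Arat K := 1 - tiA K

/-- The element `T'' = (1-T)⁻¹` of `Arat K`. -/
noncomputable def tppA (K : Type*) [Field K] : Arat K :=
  ⟨(1 - RatFunc.X)⁻¹, by
    have h1 : (RatFunc.X - 1)⁻¹ ∈ Arat K := Algebra.subset_adjoin (by simp)
    have h2 : ((1 : RatFunc K) - RatFunc.X)⁻¹ = -((RatFunc.X - 1)⁻¹) := by
      rw [← neg_sub, inv_neg]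
    rw [h2]; exact neg_mem h1⟩

open scoped TensorProduct

/-- The three-point loop algebra `sl2 ⊗ K[T,T⁻¹,(T-1)⁻¹]`
(with the algebra factor written on the left). -/
noncomputable abbrev TPL (K : Type*) [Field K] := (Arat K) ⊗[K] Sl2X K

/-- The subspace `Δ = X ⊗ K[T] + Y ⊗ T·K[T] + Z ⊗ (T-1)·K[T]` of the
three-point loop algebra. -/
noncomputable def DeltaTPL (K : Type*) [Field K] : Submodule K (TPL K) :=
  Submodule.span K
    (Set.range (fun n : ℕ => ((tA K) ^ n) ⊗ₜ[K] Sl2X.Xv K) ∪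
     Set.range (fun n : ℕ => (tA K * (tA K) ^ n) ⊗ₜ[K] Sl2X.Yv K) ∪
     Set.range (fun n : ℕ => ((tA K - 1) * (tA K) ^ n) ⊗ₜ[K] Sl2X.Zv K))

theorem Algebra.map_mem_of_mem_adjoin_singleton {R A M : Type*} [CommSemiring R] [Semiring A]
    [Algebra R A] [AddCommMonoid M] [Module R M] {x a : A} (ha : a ∈ Algebra.adjoin R {x})
    {f : A →ₗ[R] M} {p : Submodule R M} (h : ∀ n : ℕ, f (x ^ n) ∈ p) : f a ∈ p := by
  have ha' : a ∈ Submodule.span R (Submonoid.closure {x} : Set A) := by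
    rwa [← Algebra.adjoin_eq_span]
  refine (Submodule.span_le (p := p.comap f)).2 ?_ ha'
  rintro _ hy
  obtain ⟨n, rfl⟩ := Submonoid.mem_closure_singleton.1 hy
  exact h n

theorem LieAlgebra.lie_mem_span_of_forall_lie_mem_span {R L : Type*} [CommRing R] [LieRing L]
    [LieAlgebra R L] {s : Set L} (hs : ∀ x ∈ s, ∀ y ∈ s, ⁅x, y⁆ ∈ Submodule.span R s)
    {x y : L} (hx : x ∈ Submodule.span R s) (hy : y ∈ Submodule.span R s) :
    ⁅x, y⁆ ∈ Submodule.span R s := by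
  induction hx, hy using Submodule.span_induction₂ with
  | mem_mem x y hx hy => exact hs x hx y hy
  | zero_left y hy => simp
  | zero_right x hx => simp
  | add_left x y z _ _ _ hx hy => simpa using add_mem hx hy
  | add_right x y z _ _ _ hx hy => simpa using add_mem hx hy
  | smul_left r x y _ _ h => simpa using Submodule.smul_mem _ r h
  | smul_right r x y _ _ h => simpa using Submodule.smul_mem _ r h

theorem Submodule.lie_mem_of_lie_swap_mem {R L : Type*} [Ring R] [LieRing L]
    [Module R L] {p : Submodule R L} {x y : L} (h : ⁅y, x⁆ ∈ p) : ⁅x, y⁆ ∈ p := by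
  rw [← lie_skew]
  exact neg_mem h

theorem LieAlgebra.ExtendScalars.tmul_lie_tmul_self {R A L : Type*} [CommRing R] [CommRing A]
    [Algebra R A] [LieRing L] [LieAlgebra R L] (a b : A) (u : L) :
    ⁅a ⊗ₜ[R] u, b ⊗ₜ[R] u⁆ = 0 := by
  rw [bracket_tmul, lie_self, TensorProduct.tmul_zero]

namespace Sl2X

variable {K : Type*} [Field K]

theorem lie_Xv_Yv : ⁅Xv K, Yv K⁆ = (2 : K) • Xv K + (2 : K) • Yv K := by
  show TetPaper.sl2xb ![1, 0, 0] ![0, 1, 0] =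
    (2 : K) • (![1, 0, 0] : Fin 3 → K) + (2 : K) • (![0, 1, 0] : Fin 3 → K)
  funext i; fin_cases i <;> simp [TetPaper.sl2xb]

theorem lie_Yv_Zv : ⁅Yv K, Zv K⁆ = (2 : K) • Yv K + (2 : K) • Zv K := by
  show TetPaper.sl2xb ![0, 1, 0] ![0, 0, 1] =
    (2 : K) • (![0, 1, 0] : Fin 3 → K) + (2 : K) • (![0, 0, 1] : Fin 3 → K)
  funext i; fin_cases i <;> simp [TetPaper.sl2xb]

theorem lie_Zv_Xv : ⁅Zv K, Xv K⁆ = (2 : K) • Zv K + (2 : K) • Xv K := by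
  show TetPaper.sl2xb ![0, 0, 1] ![1, 0, 0] =
    (2 : K) • (![0, 0, 1] : Fin 3 → K) + (2 : K) • (![1, 0, 0] : Fin 3 → K)
  funext i; fin_cases i <;> simp [TetPaper.sl2xb]

end Sl2X

noncomputable abbrev Arat.polynomials (K : Type*) [Field K] : Subalgebra K (Arat K) :=
  Algebra.adjoin K {tA K}

namespace DeltaTPL

open TensorProduct Sl2X LieAlgebra.ExtendScalars

variable {K : Type*} [Field K] {a b : Arat K}

noncomputable def generators (K : Type*) [Field K] : Set (TPL K) :=
  Set.range (fun n : ℕ => ((tA K) ^ n) ⊗ₜ[K] Sl2X.Xv K) ∪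
    Set.range (fun n : ℕ => (tA K * (tA K) ^ n) ⊗ₜ[K] Sl2X.Yv K) ∪
    Set.range (fun n : ℕ => ((tA K - 1) * (tA K) ^ n) ⊗ₜ[K] Sl2X.Zv K)

theorem span_generators : Submodule.span K (generators K) = DeltaTPL K := rfl

theorem tA_mem_polynomials : tA K ∈ Arat.polynomials K :=
  Algebra.self_mem_adjoin_singleton K _

theorem tA_sub_one_mem_polynomials : tA K - 1 ∈ Arat.polynomials K :=
  sub_mem tA_mem_polynomials (one_mem _)

theorem tmul_Xv_mem (ha : a ∈ Arat.polynomials K) : a ⊗ₜ[K] Xv K ∈ DeltaTPL K :=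
  Algebra.map_mem_of_mem_adjoin_singleton ha (f := (TensorProduct.mk K _ _).flip (Xv K))
    fun n => Submodule.subset_span (.inl (.inl ⟨n, rfl⟩))

theorem tA_mul_tmul_Yv_mem (ha : a ∈ Arat.polynomials K) :
    (tA K * a) ⊗ₜ[K] Yv K ∈ DeltaTPL K :=
  Algebra.map_mem_of_mem_adjoin_singleton ha
    (f := (TensorProduct.mk K _ _).flip (Yv K) ∘ₗ LinearMap.mulLeft K (tA K))
    fun n => Submodule.subset_span (.inl (.inr ⟨n, rfl⟩))

theorem tA_sub_one_mul_tmul_Zv_mem (ha : a ∈ Arat.polynomials K) :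
    ((tA K - 1) * a) ⊗ₜ[K] Zv K ∈ DeltaTPL K :=
  Algebra.map_mem_of_mem_adjoin_singleton ha
    (f := (TensorProduct.mk K _ _).flip (Zv K) ∘ₗ LinearMap.mulLeft K (tA K - 1))
    fun n => Submodule.subset_span (.inr ⟨n, rfl⟩)

theorem lie_tmul_Xv_tmul_Yv_mem (ha : a ∈ Arat.polynomials K) (hb : b ∈ Arat.polynomials K) :
    ⁅a ⊗ₜ[K] Xv K, (tA K * b) ⊗ₜ[K] Yv K⁆ ∈ DeltaTPL K := by
  have hab := mul_mem ha hb
  rw [bracket_tmul, lie_Xv_Yv, tmul_add, tmul_smul, tmul_smul,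
    show a * (tA K * b) = tA K * (a * b) by ring]
  exact add_mem (Submodule.smul_mem _ _ (tmul_Xv_mem (mul_mem tA_mem_polynomials hab)))
    (Submodule.smul_mem _ _ (tA_mul_tmul_Yv_mem hab))

theorem lie_tmul_Yv_tmul_Zv_mem (ha : a ∈ Arat.polynomials K) (hb : b ∈ Arat.polynomials K) :
    ⁅(tA K * a) ⊗ₜ[K] Yv K, ((tA K - 1) * b) ⊗ₜ[K] Zv K⁆ ∈ DeltaTPL K := by
  have hab := mul_mem ha hb
  rw [bracket_tmul, lie_Yv_Zv, tmul_add, tmul_smul, tmul_smul]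
  refine add_mem (Submodule.smul_mem _ _ ?_) (Submodule.smul_mem _ _ ?_)
  · rw [show tA K * a * ((tA K - 1) * b) = tA K * ((tA K - 1) * (a * b)) by ring]
    exact tA_mul_tmul_Yv_mem (mul_mem tA_sub_one_mem_polynomials hab)
  · rw [show tA K * a * ((tA K - 1) * b) = (tA K - 1) * (tA K * (a * b)) by ring]
    exact tA_sub_one_mul_tmul_Zv_mem (mul_mem tA_mem_polynomials hab)

theorem lie_tmul_Zv_tmul_Xv_mem (ha : a ∈ Arat.polynomials K) (hb : b ∈ Arat.polynomials K) :
    ⁅((tA K - 1) * a) ⊗ₜ[K] Zv K, b ⊗ₜ[K] Xv K⁆ ∈ DeltaTPL K := by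
  have hab := mul_mem ha hb
  rw [bracket_tmul, lie_Zv_Xv, tmul_add, tmul_smul, tmul_smul, mul_assoc]
  exact add_mem (Submodule.smul_mem _ _ (tA_sub_one_mul_tmul_Zv_mem hab))
    (Submodule.smul_mem _ _ (tmul_Xv_mem (mul_mem tA_sub_one_mem_polynomials hab)))

theorem lie_mem_of_mem_generators {x y : TPL K} (hx : x ∈ generators K)
    (hy : y ∈ generators K) : ⁅x, y⁆ ∈ Submodule.span K (generators K) := by
  rw [span_generators]
  have hT (n : ℕ) : tA K ^ n ∈ Arat.polynomials K := pow_mem tA_mem_polynomials n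
  rcases hx with (⟨m, rfl⟩ | ⟨m, rfl⟩) | ⟨m, rfl⟩ <;>
    rcases hy with (⟨n, rfl⟩ | ⟨n, rfl⟩) | ⟨n, rfl⟩
  · rw [tmul_lie_tmul_self]; exact zero_mem _
  · exact lie_tmul_Xv_tmul_Yv_mem (hT m) (hT n)
  · exact Submodule.lie_mem_of_lie_swap_mem (lie_tmul_Zv_tmul_Xv_mem (hT n) (hT m))
  · exact Submodule.lie_mem_of_lie_swap_mem (lie_tmul_Xv_tmul_Yv_mem (hT n) (hT m))
  · rw [tmul_lie_tmul_self]; exact zero_mem _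
  · exact lie_tmul_Yv_tmul_Zv_mem (hT m) (hT n)
  · exact lie_tmul_Zv_tmul_Xv_mem (hT m) (hT n)
  · exact Submodule.lie_mem_of_lie_swap_mem (lie_tmul_Yv_tmul_Zv_mem (hT n) (hT m))
  · rw [tmul_lie_tmul_self]; exact zero_mem _

end DeltaTPL

theorem stmt12_general (K : Type*) [Field K] :
    ∀ u ∈ DeltaTPL K, ∀ v ∈ DeltaTPL K, ⁅u, v⁆ ∈ DeltaTPL K := by
  simp only [← DeltaTPL.span_generators]
  exact fun _ hu _ hv => LieAlgebra.lie_mem_span_of_forall_lie_mem_span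
    (fun _ hx _ hy => DeltaTPL.lie_mem_of_mem_generators hx hy) hu hv

/-- `Δ` is closed under the Lie bracket, i.e. it is a Lie subalgebra
of the three-point loop algebra. -/
theorem stmt12 (K : Type*) [Field K] [CharZero K] :
    ∀ u ∈ DeltaTPL K, ∀ v ∈ DeltaTPL K, ⁅u, v⁆ ∈ DeltaTPL K :=
  stmt12_general K
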